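/- Let E ⊂ ℝ^d be compact, let ν be a probability measure on E, and let F, G ∈ L¹(ν) be strictly positive bounded measurable functions on E. Then: W₁(Ψ_G(ν), Ψ_F(ν)) ≤ diam(E) · ‖G/ν(G) − F/ν(F)‖_{L¹(ν)}. Consequently, if {F_n} ⊂ L¹(ν) are strictly positive bounded measurable functions converging to G in L¹(ν) (with ν(F_n) → ν(G) > 0), then W₁(Ψ_{F_n}(ν), Ψ_G(ν)) → 0, i.e., F ↦ Ψ_F(ν) is continuous from L¹(ν) to the 1-Wasserstein space over E. -/

import Mathlib

open MeasureTheory Filter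
open scoped NNReal ENNReal

noncomputable section

/-- ℓ¹ distance on `ℝ^d`. -/
def l1dist {d : ℕ} (x y : Fin d → ℝ) : ℝ := ∑ i, |x i - y i|

/-- The set of couplings of two measures. -/
def couplings {α : Type*} [MeasurableSpace α] (μ ν : Measure α) : Set (Measure (α × α)) :=
  {π | IsProbabilityMeasure π ∧ π.map Prod.fst = μ ∧ π.map Prod.snd = ν}

/-- Optimal transport cost with ground cost `c`. -/
def Wcost {α : Type*} [MeasurableSpace α] (c : α → α → ℝ) (μ ν : Measure α) : ℝ :=
  sInf ((fun π : Measure (α × α) => ∫ p, c p.1 p.2 ∂π) '' couplings μ ν)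

/-- 1-Wasserstein distance on `ℝ^d` with ℓ¹ ground cost. -/
def W1 {d : ℕ} (μ ν : Measure (Fin d → ℝ)) : ℝ := Wcost l1dist μ ν

/-- Boltzmann–Gibbs transformation `Ψ_g(ν)(dx) = g(x) ν(dx) / ν(g)`. -/
def BG {d : ℕ} (g : (Fin d → ℝ) → ℝ) (ν : Measure (Fin d → ℝ)) : Measure (Fin d → ℝ) :=
  ν.withDensity (fun x => ENNReal.ofReal (g x / ∫ y, g y ∂ν))

/-- Real-valued Kullback–Leibler divergence `∫ log(dμ/dν) dμ`
(the generalized entropy of the paper is `H_ν(μ) = -KL μ ν`). -/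
def KL {α : Type*} [MeasurableSpace α] (μ ν : Measure α) : ℝ :=
  ∫ x, Real.log ((μ.rnDeriv ν x).toReal) ∂μ

/-- Convolution of two measures on `ℝ^d`. -/
def mconv {d : ℕ} (μ ν : Measure (Fin d → ℝ)) : Measure (Fin d → ℝ) :=
  (μ.prod ν).map (fun p => p.1 + p.2)

/-- Empirical measure of a finite family of points. -/
def empMeasure {d N : ℕ} (x : Fin N → (Fin d → ℝ)) : Measure (Fin d → ℝ) :=
  (N : ℝ≥0∞)⁻¹ • ∑ i, Measure.dirac (x i)

/-!
Couple `p ν` and `q ν` by leaving the common mass `min p q · ν` on the diagonal, where the cost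
vanishes, and coupling the excesses `(p - q)⁺ ν` and `(q - p)⁺ ν` independently. The excesses have
mass at most `‖p - q‖₁`, and on `E × E` the cost is at most the diameter. Continuity then follows
from `‖f / ν(f) - g / ν(g)‖₁ ≤ 2 ‖f - g‖₁ / ν(f)`.
-/

open Set

section Coupling

variable {α : Type*} [MeasurableSpace α]

lemma Wcost_nonneg {c : α → α → ℝ} (hc0 : ∀ x y, 0 ≤ c x y) (μ ν : Measure α) :
    0 ≤ Wcost c μ ν :=
  Real.sInf_nonneg <| by
    rintro r ⟨π, -, rfl⟩
    exact integral_nonneg fun z => hc0 z.1 z.2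

lemma Wcost_le_integral {c : α → α → ℝ} (hc0 : ∀ x y, 0 ≤ c x y) {μ ν : Measure α}
    {π : Measure (α × α)} (hπ : π ∈ couplings μ ν) :
    Wcost c μ ν ≤ ∫ z, c z.1 z.2 ∂π := by
  refine csInf_le ⟨0, ?_⟩ ⟨π, hπ, rfl⟩
  rintro r ⟨π', -, rfl⟩
  exact integral_nonneg fun z => hc0 z.1 z.2

lemma ae_mem_prod_of_mem_couplings {μ ν : Measure α} {π : Measure (α × α)}
    (hπ : π ∈ couplings μ ν) {E : Set α} (hμ : ∀ᵐ x ∂μ, x ∈ E) (hν : ∀ᵐ x ∂ν, x ∈ E) :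
    ∀ᵐ z ∂π, z.1 ∈ E ∧ z.2 ∈ E := by
  obtain ⟨-, hfst, hsnd⟩ := hπ
  rw [← hfst] at hμ
  rw [← hsnd] at hν
  exact (ae_of_ae_map measurable_fst.aemeasurable hμ).and
    (ae_of_ae_map measurable_snd.aemeasurable hν)

lemma integral_le_mul_measureReal_compl_diagonal [MeasurableEq α] {c : α → α → ℝ}
    (hc0 : ∀ x y, 0 ≤ c x y) (hc : ∀ x, c x x = 0) {π : Measure (α × α)} [IsFiniteMeasure π]
    {D : ℝ} (hD : ∀ᵐ z ∂π, c z.1 z.2 ≤ D) :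
    ∫ z, c z.1 z.2 ∂π ≤ D * π.real (diagonal α)ᶜ := by
  have hmeas : MeasurableSet (diagonal α)ᶜ := measurableSet_diagonal.compl
  calc ∫ z, c z.1 z.2 ∂π ≤ ∫ z, (diagonal α)ᶜ.indicator (fun _ => D) z ∂π := by
        refine integral_mono_of_nonneg (.of_forall fun z => hc0 z.1 z.2)
          ((integrable_const D).indicator hmeas) ?_
        filter_upwards [hD] with z hz
        by_cases hz' : z ∈ diagonal α
        · rw [indicator_of_notMem (notMem_compl_iff.2 hz'), mem_diagonal_iff.1 hz', hc]
        · rwa [indicator_of_mem hz']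
    _ = D * π.real (diagonal α)ᶜ := by
        rw [integral_indicator_const D hmeas, smul_eq_mul, mul_comm]

lemma inv_measure_univ_smul_smul (μ : Measure α) [IsFiniteMeasure μ] :
    (μ univ)⁻¹ • μ univ • μ = μ := by
  rcases eq_or_ne μ 0 with rfl | hμ
  · simp
  · rw [smul_smul, ENNReal.inv_mul_cancel (by simpa using hμ) (measure_ne_top μ univ), one_smul]

def overlapCoupling (κ μ₁ μ₂ : Measure α) : Measure (α × α) :=
  κ.map (fun x => (x, x)) + (μ₁ univ)⁻¹ • μ₁.prod μ₂

variable (κ : Measure α) {μ₁ μ₂ : Measure α}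

lemma map_fst_overlapCoupling [IsFiniteMeasure μ₁] [IsFiniteMeasure μ₂] (h : μ₁ univ = μ₂ univ) :
    (overlapCoupling κ μ₁ μ₂).map Prod.fst = κ + μ₁ := by
  rw [overlapCoupling, Measure.map_add _ _ measurable_fst, Measure.map_smul,
    Measure.map_fst_prod, Measure.map_map measurable_fst (measurable_id'.prodMk measurable_id'),
    ← h, inv_measure_univ_smul_smul]
  exact congrArg (· + μ₁) Measure.map_id

lemma map_snd_overlapCoupling [IsFiniteMeasure μ₂] (h : μ₁ univ = μ₂ univ) :
    (overlapCoupling κ μ₁ μ₂).map Prod.snd = κ + μ₂ := by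
  rw [overlapCoupling, Measure.map_add _ _ measurable_snd, Measure.map_smul,
    Measure.map_snd_prod, Measure.map_map measurable_snd (measurable_id'.prodMk measurable_id'),
    h, inv_measure_univ_smul_smul]
  exact congrArg (· + μ₂) Measure.map_id

lemma overlapCoupling_compl_diagonal_le [MeasurableEq α] [SFinite μ₂] :
    overlapCoupling κ μ₁ μ₂ (diagonal α)ᶜ ≤ μ₂ univ := by
  rw [overlapCoupling, Measure.add_apply, Measure.smul_apply,
    Measure.map_apply (measurable_id'.prodMk measurable_id') measurableSet_diagonal.compl]
  have hdiag : (fun x : α => (x, x)) ⁻¹' (diagonal α)ᶜ = ∅ := by ext; simp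
  calc κ ((fun x => (x, x)) ⁻¹' (diagonal α)ᶜ) + (μ₁ univ)⁻¹ • μ₁.prod μ₂ (diagonal α)ᶜ
      ≤ 0 + (μ₁ univ)⁻¹ * (μ₁ univ * μ₂ univ) := by
        rw [hdiag, measure_empty, smul_eq_mul, ← Measure.prod_prod, univ_prod_univ]
        gcongr
        exact subset_univ _
    _ ≤ μ₂ univ := by
        rw [zero_add, ← mul_assoc]
        exact mul_le_of_le_one_left zero_le (ENNReal.inv_mul_le_one _)

lemma overlapCoupling_mem_couplings [IsFiniteMeasure μ₁] [IsFiniteMeasure μ₂]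
    [IsProbabilityMeasure (κ + μ₁)] [IsProbabilityMeasure (κ + μ₂)] :
    overlapCoupling κ μ₁ μ₂ ∈ couplings (κ + μ₁) (κ + μ₂) := by
  have : IsFiniteMeasure κ := isFiniteMeasure_of_le (κ + μ₁) (Measure.le_add_right le_rfl)
  have hmass : μ₁ univ = μ₂ univ := by
    refine (ENNReal.add_right_inj (measure_ne_top κ univ)).1 ?_
    rw [← Measure.add_apply, ← Measure.add_apply, measure_univ, measure_univ]
  have hfst := map_fst_overlapCoupling κ hmass
  refine ⟨⟨?_⟩, hfst, map_snd_overlapCoupling κ hmass⟩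
  rw [← preimage_univ (f := Prod.fst), ← Measure.map_apply measurable_fst .univ, hfst,
    measure_univ]

end Coupling

section Density

variable {α : Type*} [MeasurableSpace α]

lemma ENNReal.ofReal_min_add_ofReal_sub {p q : ℝ} (hq : 0 ≤ q) :
    ENNReal.ofReal (min p q) + ENNReal.ofReal (p - q) = ENNReal.ofReal p := by
  rcases le_total p q with h | h
  · rw [min_eq_left h, ENNReal.ofReal_of_nonpos (sub_nonpos.2 h), add_zero]
  · rw [min_eq_right h, ← ENNReal.ofReal_add hq (sub_nonneg.2 h), add_sub_cancel]

lemma withDensity_ofReal_eq_min_add_sub (ν : Measure α) {p q : α → ℝ} (hp : Measurable p)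
    (hq : Measurable q) (hq0 : 0 ≤ q) :
    ν.withDensity (fun x => ENNReal.ofReal (p x)) =
      ν.withDensity (fun x => ENNReal.ofReal (min (p x) (q x))) +
        ν.withDensity (fun x => ENNReal.ofReal (p x - q x)) := by
  rw [← withDensity_add_left (hp.min hq).ennreal_ofReal]
  congr with x
  exact (ENNReal.ofReal_min_add_ofReal_sub (hq0 x)).symm

lemma isProbabilityMeasure_withDensity_ofReal {ν : Measure α} {p : α → ℝ} (hp0 : 0 ≤ p)
    (hp1 : ∫ x, p x ∂ν = 1) :
    IsProbabilityMeasure (ν.withDensity fun x => ENNReal.ofReal (p x)) := by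
  constructor
  rw [withDensity_apply _ .univ, setLIntegral_univ,
    ← ofReal_integral_eq_lintegral_ofReal (.of_integral_ne_zero (by simp [hp1]))
      (.of_forall hp0), hp1, ENNReal.ofReal_one]

lemma measure_univ_withDensity_ofReal_sub_le {ν : Measure α} {p q : α → ℝ}
    (hpq : Integrable (fun x => p x - q x) ν) :
    (ν.withDensity fun x => ENNReal.ofReal (q x - p x)) univ ≤
      ENNReal.ofReal (∫ x, |p x - q x| ∂ν) := by
  rw [withDensity_apply _ .univ, setLIntegral_univ,
    ofReal_integral_eq_lintegral_ofReal hpq.abs (.of_forall fun x => abs_nonneg _)]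
  gcongr with x
  rw [abs_sub_comm]
  exact le_abs_self _

theorem Wcost_withDensity_le [MeasurableEq α] {c : α → α → ℝ} (hc0 : ∀ x y, 0 ≤ c x y)
    (hc : ∀ x, c x x = 0) {E : Set α} {D : ℝ} (hD : ∀ x ∈ E, ∀ y ∈ E, c x y ≤ D)
    {ν : Measure α} (hνE : ∀ᵐ x ∂ν, x ∈ E) {p q : α → ℝ} (hp : Measurable p)
    (hq : Measurable q) (hp0 : 0 ≤ p) (hq0 : 0 ≤ q) (hp1 : ∫ x, p x ∂ν = 1)
    (hq1 : ∫ x, q x ∂ν = 1) :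
    Wcost c (ν.withDensity fun x => ENNReal.ofReal (p x))
        (ν.withDensity fun x => ENNReal.ofReal (q x)) ≤ D * ∫ x, |p x - q x| ∂ν := by
  have hpi : Integrable p ν := .of_integral_ne_zero (by simp [hp1])
  have hqi : Integrable q ν := .of_integral_ne_zero (by simp [hq1])
  have hD0 : 0 ≤ D := by
    have : ν ≠ 0 := by rintro rfl; simp at hp1
    have := ae_neBot.2 this
    obtain ⟨x, hx⟩ := hνE.exists
    exact hc x ▸ hD x hx x hx
  set μp := ν.withDensity fun x => ENNReal.ofReal (p x)
  set μq := ν.withDensity fun x => ENNReal.ofReal (q x)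
  set κ := ν.withDensity fun x => ENNReal.ofReal (min (p x) (q x))
  set μ₁ := ν.withDensity fun x => ENNReal.ofReal (p x - q x)
  set μ₂ := ν.withDensity fun x => ENNReal.ofReal (q x - p x)
  have hμp : μp = κ + μ₁ := withDensity_ofReal_eq_min_add_sub ν hp hq hq0
  have hμq : μq = κ + μ₂ := by
    simp_rw [μq, withDensity_ofReal_eq_min_add_sub ν hq hp hp0, κ, min_comm]
    rfl
  have : IsProbabilityMeasure (κ + μ₁) := hμp ▸ isProbabilityMeasure_withDensity_ofReal hp0 hp1
  have : IsProbabilityMeasure (κ + μ₂) := hμq ▸ isProbabilityMeasure_withDensity_ofReal hq0 hq1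
  have : IsFiniteMeasure μ₁ := isFiniteMeasure_withDensity_ofReal (hpi.sub hqi).hasFiniteIntegral
  have : IsFiniteMeasure μ₂ := isFiniteMeasure_withDensity_ofReal (hqi.sub hpi).hasFiniteIntegral
  set π := overlapCoupling κ μ₁ μ₂
  have hπ : π ∈ couplings μp μq := hμp ▸ hμq ▸ overlapCoupling_mem_couplings κ
  have : IsProbabilityMeasure π := hπ.1
  have hπE := ae_mem_prod_of_mem_couplings hπ
    ((withDensity_absolutelyContinuous ν _).ae_le hνE)
    ((withDensity_absolutelyContinuous ν _).ae_le hνE)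
  calc Wcost c μp μq ≤ ∫ z, c z.1 z.2 ∂π := Wcost_le_integral hc0 hπ
    _ ≤ D * π.real (diagonal α)ᶜ :=
        integral_le_mul_measureReal_compl_diagonal hc0 hc <| by
          filter_upwards [hπE] with z hz using hD _ hz.1 _ hz.2
    _ ≤ D * (μ₂ univ).toReal := by
        gcongr
        exact ENNReal.toReal_mono (measure_ne_top μ₂ univ)
          (overlapCoupling_compl_diagonal_le κ)
    _ ≤ D * ∫ x, |p x - q x| ∂ν := by
        gcongr
        exact ENNReal.toReal_le_of_le_ofReal (integral_nonneg fun x => abs_nonneg _)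
          (measure_univ_withDensity_ofReal_sub_le (hpi.sub hqi))

end Density

section Normalization

variable {α : Type*} [MeasurableSpace α] {ν : Measure α}

lemma integral_div_integral_self {f : α → ℝ} (hf : ∫ x, f x ∂ν ≠ 0) :
    ∫ x, f x / ∫ y, f y ∂ν ∂ν = 1 := by
  rw [integral_div, div_self hf]

lemma integral_pos_of_pos_of_bdd [IsFiniteMeasure ν] [NeZero ν] {f : α → ℝ}
    (hf : Measurable f) (hpos : ∀ x, 0 < f x) (hbdd : ∃ C, ∀ x, f x ≤ C) :
    0 < ∫ x, f x ∂ν := by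
  obtain ⟨C, hC⟩ := hbdd
  have hfi : Integrable f ν := .of_bound hf.aestronglyMeasurable C <|
    .of_forall fun x => by rw [Real.norm_of_nonneg (hpos x).le]; exact hC x
  have hsupp : Function.support f = univ := eq_univ_of_forall fun x => (hpos x).ne'
  rw [integral_pos_iff_support_of_nonneg (fun x => (hpos x).le) hfi, hsupp]
  exact Measure.measure_univ_pos.2 (NeZero.ne ν)

lemma integral_abs_div_integral_sub_le {f g : α → ℝ} (hg0 : 0 ≤ g) (hf : 0 < ∫ x, f x ∂ν)
    (hg : 0 < ∫ x, g x ∂ν) :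
    ∫ x, |f x / ∫ y, f y ∂ν - g x / ∫ y, g y ∂ν| ∂ν ≤
      2 * (∫ x, |f x - g x| ∂ν) / ∫ x, f x ∂ν := by
  set a := ∫ y, f y ∂ν
  set b := ∫ y, g y ∂ν
  have hfi : Integrable f ν := .of_integral_ne_zero hf.ne'
  have hgi : Integrable g ν := .of_integral_ne_zero hg.ne'
  have hfg : Integrable (fun x => |f x - g x|) ν := (hfi.sub hgi).abs
  have hpt : ∀ x, |f x / a - g x / b| ≤ |f x - g x| / a + g x * (|b - a| / (a * b)) := by
    intro x
    have : f x / a - g x / b = (f x - g x) / a + g x * ((b - a) / (a * b)) := by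
      field_simp
      ring
    rw [this]
    refine (abs_add_le _ _).trans_eq ?_
    rw [abs_div, abs_of_pos hf, abs_mul, abs_of_nonneg (hg0 x), abs_div,
      abs_of_pos (mul_pos hf hg)]
  have hba : |b - a| ≤ ∫ x, |f x - g x| ∂ν := by
    rw [← integral_sub hgi hfi]
    simp_rw [abs_sub_comm (f _)]
    exact abs_integral_le_integral_abs
  calc ∫ x, |f x / a - g x / b| ∂ν
      ≤ ∫ x, (|f x - g x| / a + g x * (|b - a| / (a * b))) ∂ν :=
        integral_mono ((hfi.div_const a).sub (hgi.div_const b)).abs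
          ((hfg.div_const a).add (hgi.mul_const _)) hpt
    _ = ((∫ x, |f x - g x| ∂ν) + |b - a|) / a := by
        rw [integral_add (hfg.div_const a) (hgi.mul_const _), integral_div, integral_mul_const,
          show ∫ x, g x ∂ν = b from rfl]
        field_simp
    _ ≤ 2 * (∫ x, |f x - g x| ∂ν) / a := by
        gcongr
        linarith

lemma tendsto_integral_abs_div_integral_sub {ι : Type*} {l : Filter ι} {f : ι → α → ℝ}
    {g : α → ℝ} (hg0 : 0 ≤ g) (hf : ∀ i, 0 < ∫ x, f i x ∂ν) (hg : 0 < ∫ x, g x ∂ν)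
    (hL1 : Tendsto (fun i => ∫ x, |f i x - g x| ∂ν) l (nhds 0))
    (hint : Tendsto (fun i => ∫ x, f i x ∂ν) l (nhds (∫ x, g x ∂ν))) :
    Tendsto (fun i => ∫ x, |f i x / ∫ y, f i y ∂ν - g x / ∫ y, g y ∂ν| ∂ν) l (nhds 0) := by
  have hbound : Tendsto (fun i => 2 * (∫ x, |f i x - g x| ∂ν) / ∫ x, f i x ∂ν) l (nhds 0) := by
    have := (hL1.const_mul 2).div hint hg.ne'
    rwa [mul_zero, zero_div] at this
  exact squeeze_zero (fun i => integral_nonneg fun x => abs_nonneg _)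
    (fun i => integral_abs_div_integral_sub_le hg0 (hf i) hg) hbound

end Normalization

lemma l1dist_nonneg {d : ℕ} (x y : Fin d → ℝ) : 0 ≤ l1dist x y :=
  Finset.sum_nonneg fun _ _ => abs_nonneg _

lemma l1dist_self {d : ℕ} (x : Fin d → ℝ) : l1dist x x = 0 := by
  simp [l1dist]

lemma W1_nonneg {d : ℕ} (μ ν : Measure (Fin d → ℝ)) : 0 ≤ W1 μ ν :=
  Wcost_nonneg l1dist_nonneg μ ν

theorem W1_BG_le {d : ℕ} {E : Set (Fin d → ℝ)} {D : ℝ}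
    (hD : ∀ x ∈ E, ∀ y ∈ E, l1dist x y ≤ D) {ν : Measure (Fin d → ℝ)} (hνE : ∀ᵐ x ∂ν, x ∈ E)
    {f g : (Fin d → ℝ) → ℝ} (hf : Measurable f) (hg : Measurable g) (hf0 : 0 ≤ f) (hg0 : 0 ≤ g)
    (hfi : 0 < ∫ x, f x ∂ν) (hgi : 0 < ∫ x, g x ∂ν) :
    W1 (BG f ν) (BG g ν) ≤ D * ∫ x, |f x / ∫ y, f y ∂ν - g x / ∫ y, g y ∂ν| ∂ν :=
  Wcost_withDensity_le l1dist_nonneg l1dist_self hD hνE (hf.div_const _) (hg.div_const _)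
    (fun x => div_nonneg (hf0 x) hfi.le) (fun x => div_nonneg (hg0 x) hgi.le)
    (integral_div_integral_self hfi.ne') (integral_div_integral_self hgi.ne')

theorem statement13_general {d : ℕ} (E : Set (Fin d → ℝ)) (hEc : IsCompact E)
    (ν : Measure (Fin d → ℝ)) [IsProbabilityMeasure ν] (hνE : ν E = 1)
    (D : ℝ) (hD : ∀ x ∈ E, ∀ y ∈ E, l1dist x y ≤ D)
    (F G : (Fin d → ℝ) → ℝ) (hFmeas : Measurable F) (hGmeas : Measurable G)
    (hFpos : ∀ x, 0 < F x) (hGpos : ∀ x, 0 < G x)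
    (hFbdd : ∃ C, ∀ x, F x ≤ C)
    (Fn : ℕ → (Fin d → ℝ) → ℝ) (hFnmeas : ∀ n, Measurable (Fn n))
    (hFnpos : ∀ n x, 0 < Fn n x) (hFnbdd : ∀ n, ∃ C, ∀ x, Fn n x ≤ C)
    (hFnL1 : Tendsto (fun n => ∫ x, |Fn n x - G x| ∂ν) atTop (nhds 0))
    (hFnint : Tendsto (fun n => ∫ x, Fn n x ∂ν) atTop (nhds (∫ x, G x ∂ν)))
    (hGint : 0 < ∫ x, G x ∂ν) :
    W1 (BG G ν) (BG F ν)
        ≤ D * ∫ x, |G x / (∫ y, G y ∂ν) - F x / (∫ y, F y ∂ν)| ∂ν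
      ∧ Tendsto (fun n => W1 (BG (Fn n) ν) (BG G ν)) atTop (nhds 0) := by
  have hE : ∀ᵐ x ∂ν, x ∈ E :=
    (ae_mem_iff_measure_eq hEc.isClosed.measurableSet.nullMeasurableSet).2
      (by rw [hνE, measure_univ])
  have hG0 : 0 ≤ G := fun x => (hGpos x).le
  have hFint_pos := integral_pos_of_pos_of_bdd (ν := ν) hFmeas hFpos hFbdd
  have hFnint_pos n := integral_pos_of_pos_of_bdd (ν := ν) (hFnmeas n) (hFnpos n) (hFnbdd n)
  refine ⟨W1_BG_le hD hE hGmeas hFmeas hG0 (fun x => (hFpos x).le) hGint hFint_pos, ?_⟩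
  have hnorm := tendsto_integral_abs_div_integral_sub hG0 hFnint_pos hGint hFnL1 hFnint
  refine squeeze_zero (fun n => W1_nonneg _ _) (fun n => W1_BG_le hD hE (hFnmeas n) hGmeas
    (fun x => (hFnpos n x).le) hG0 (hFnint_pos n) hGint) ?_
  simpa using hnorm.const_mul D

/-- `W₁(Ψ_G(ν), Ψ_F(ν)) ≤ diam(E) ‖G/ν(G) − F/ν(F)‖_{L¹(ν)}`, and consequently
`F ↦ Ψ_F(ν)` is continuous from `L¹(ν)` to the 1-Wasserstein space over a compact `E`.
Here `D` is the ℓ¹-diameter of `E`. -/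
theorem statement13 {d : ℕ} (E : Set (Fin d → ℝ)) (hEc : IsCompact E)
    (ν : Measure (Fin d → ℝ)) [IsProbabilityMeasure ν] (hνE : ν E = 1)
    (D : ℝ) (hD : ∀ x ∈ E, ∀ y ∈ E, l1dist x y ≤ D)
    (F G : (Fin d → ℝ) → ℝ) (hFmeas : Measurable F) (hGmeas : Measurable G)
    (hFpos : ∀ x, 0 < F x) (hGpos : ∀ x, 0 < G x)
    (hFbdd : ∃ C, ∀ x, F x ≤ C) (hGbdd : ∃ C, ∀ x, G x ≤ C)
    (Fn : ℕ → (Fin d → ℝ) → ℝ) (hFnmeas : ∀ n, Measurable (Fn n))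
    (hFnpos : ∀ n x, 0 < Fn n x) (hFnbdd : ∀ n, ∃ C, ∀ x, Fn n x ≤ C)
    (hFnL1 : Tendsto (fun n => ∫ x, |Fn n x - G x| ∂ν) atTop (nhds 0))
    (hFnint : Tendsto (fun n => ∫ x, Fn n x ∂ν) atTop (nhds (∫ x, G x ∂ν)))
    (hGint : 0 < ∫ x, G x ∂ν) :
    W1 (BG G ν) (BG F ν)
        ≤ D * ∫ x, |G x / (∫ y, G y ∂ν) - F x / (∫ y, F y ∂ν)| ∂ν
      ∧ Tendsto (fun n => W1 (BG (Fn n) ν) (BG G ν)) atTop (nhds 0) :=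
  statement13_general E hEc ν hνE D hD F G hFmeas hGmeas hFpos hGpos hFbdd Fn hFnmeas hFnpos hFnbdd
    hFnL1 hFnint hGint
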